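/- The partic algebra PP_3 (i.e. N = 4 positions with three generators a_1, a_2, a_3) has zero divisors: the element a_3^5 a_2^8 a_1^8 a_2^3 a_3 − a_3^5 a_2^7 a_1^8 a_2^4 a_3 is nonzero but is annihilated by left multiplication by a_2. -/

import Mathlib

inductive ParticRel (K : Type*) [CommRing K] (N : ℕ) :
    FreeAlgebra K (Fin (N - 1)) → FreeAlgebra K (Fin (N - 1)) → Prop
  | plac1 : ∀ i j : Fin (N - 1), (i : ℕ) = (j : ℕ) + 1 →
      ParticRel K N (FreeAlgebra.ι K i * FreeAlgebra.ι K j * FreeAlgebra.ι K i)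
        (FreeAlgebra.ι K i * FreeAlgebra.ι K i * FreeAlgebra.ι K j)
  | plac2 : ∀ i j : Fin (N - 1), (j : ℕ) = (i : ℕ) + 1 →
      ParticRel K N (FreeAlgebra.ι K i * FreeAlgebra.ι K j * FreeAlgebra.ι K i)
        (FreeAlgebra.ι K j * FreeAlgebra.ι K i * FreeAlgebra.ι K i)
  | comm : ∀ i j : Fin (N - 1), (i : ℕ) + 1 < (j : ℕ) →
      ParticRel K N (FreeAlgebra.ι K i * FreeAlgebra.ι K j)
        (FreeAlgebra.ι K j * FreeAlgebra.ι K i)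
  | partic : ∀ lo mid hi : Fin (N - 1), (mid : ℕ) = (lo : ℕ) + 1 → (hi : ℕ) = (mid : ℕ) + 1 →
      ParticRel K N
        (FreeAlgebra.ι K mid * FreeAlgebra.ι K lo * FreeAlgebra.ι K hi * FreeAlgebra.ι K mid)
        (FreeAlgebra.ι K hi * FreeAlgebra.ι K mid * FreeAlgebra.ι K lo * FreeAlgebra.ι K mid)

/-- The partic algebra `PP_N`, with generators `a_1, …, a_{N-1}`. -/
abbrev ParticAlgebra (K : Type*) [CommRing K] (N : ℕ) := RingQuot (ParticRel K N)

/-- The generator `a_i` of the partic algebra, for `1 ≤ i ≤ N-1` (junk value `0`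
outside that range). -/
noncomputable def ppa (K : Type*) [CommRing K] (N : ℕ) (i : ℕ) : ParticAlgebra K N :=
  if h : 1 ≤ i ∧ i ≤ N - 1 then
    RingQuot.mkAlgHom K (ParticRel K N) (FreeAlgebra.ι K ⟨i - 1, by omega⟩) else 0

/-!
Write `w₁ = a₃⁵ a₂⁸ a₁⁸ a₂³ a₃` and `w₂ = a₃⁵ a₂⁷ a₁⁸ a₂⁴ a₃`. Sending `a₁ ↦ u`, `a₂ ↦ d`, `a₃ ↦ 1`
for elements of a monoid with `d * u = 1` respects all the relations, and maps `w₁` to `d³` and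
`w₂` to `u d⁴`. For the successor and predecessor maps on `ℕ` these differ at `0`, so `w₁ - w₂`
is nonzero already in the monoid algebra of `Function.End ℕ`.

The relations, oriented so that each rewrite decreases a word lexicographically for
`a₁ < a₂ < a₃`, together with the consequence `a₂ a₃ a₂ a₁ = a₂ a₁ a₃ a₂`, reduce both
`a₂ w₁` and `a₂ w₂` to the same word `(a₂ a₁)⁷ a₃ a₂ a₁ (a₃ a₂)⁴ a₃`.
-/

structure IsParticFamily {M : Type*} [Monoid M] {n : ℕ} (f : Fin n → M) : Prop where
  plac₁ : ∀ i j : Fin n, (i : ℕ) = j + 1 → f i * f j * f i = f i * f i * f j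
  plac₂ : ∀ i j : Fin n, (j : ℕ) = i + 1 → f i * f j * f i = f j * f i * f i
  comm : ∀ i j : Fin n, (i : ℕ) + 1 < j → f i * f j = f j * f i
  partic : ∀ lo mid hi : Fin n, (mid : ℕ) = lo + 1 → (hi : ℕ) = mid + 1 →
    f mid * f lo * f hi * f mid = f hi * f mid * f lo * f mid

namespace IsParticFamily

variable {M M' : Type*} [Monoid M] [Monoid M'] {n : ℕ} {f : Fin n → M}

theorem map (hf : IsParticFamily f) (φ : M →* M') : IsParticFamily (φ ∘ f) where
  plac₁ i j h := by simp only [Function.comp_apply, ← map_mul, hf.plac₁ i j h]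
  plac₂ i j h := by simp only [Function.comp_apply, ← map_mul, hf.plac₂ i j h]
  comm i j h := by simp only [Function.comp_apply, ← map_mul, hf.comm i j h]
  partic lo mid hi h₁ h₂ := by
    simp only [Function.comp_apply, ← map_mul, hf.partic lo mid hi h₁ h₂]

theorem lift_eq_lift_of_particRel {K A : Type*} [CommRing K] [Semiring A] [Algebra K A] {N : ℕ}
    {f : Fin (N - 1) → A} (hf : IsParticFamily f) ⦃x y : FreeAlgebra K (Fin (N - 1))⦄
    (h : ParticRel K N x y) : FreeAlgebra.lift K f x = FreeAlgebra.lift K f y := by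
  induction h with
  | plac1 i j h => simpa only [map_mul, FreeAlgebra.lift_ι_apply] using hf.plac₁ i j h
  | plac2 i j h => simpa only [map_mul, FreeAlgebra.lift_ι_apply] using hf.plac₂ i j h
  | comm i j h => simpa only [map_mul, FreeAlgebra.lift_ι_apply] using hf.comm i j h
  | partic lo mid hi h₁ h₂ =>
    simpa only [map_mul, FreeAlgebra.lift_ι_apply] using hf.partic lo mid hi h₁ h₂

theorem of_mul_eq_one {u d : M} (h : d * u = 1) : IsParticFamily ![u, d, 1] where
  plac₁ i j hij := by fin_cases i <;> fin_cases j <;> simp_all [mul_assoc]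
  plac₂ i j hij := by fin_cases i <;> fin_cases j <;> simp_all [mul_assoc]
  comm i j hij := by fin_cases i <;> fin_cases j <;> simp_all
  partic lo mid hi h₁ h₂ := by fin_cases lo <;> fin_cases mid <;> fin_cases hi <;> simp_all

theorem fin_three_mul_eq_mul {f : Fin 3 → M} (hf : IsParticFamily f) :
    f 1 * (f 2 ^ 5 * f 1 ^ 8 * f 0 ^ 8 * f 1 ^ 3 * f 2) =
      f 1 * (f 2 ^ 5 * f 1 ^ 7 * f 0 ^ 8 * f 1 ^ 4 * f 2) := by
  set x := f 0
  set y := f 1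
  set z := f 2
  have r₁ (t : M) : y * (y * (x * t)) = y * (x * (y * t)) := by
    simp only [← mul_assoc, (show y * x * y = y * y * x from hf.plac₁ 1 0 rfl)]
  have r₂ (t : M) : y * (x * (x * t)) = x * (y * (x * t)) := by
    simp only [← mul_assoc, (show x * y * x = y * x * x from hf.plac₂ 0 1 rfl)]
  have r₃ (t : M) : z * (y * (y * t)) = y * (z * (y * t)) := by
    simp only [← mul_assoc, (show y * z * y = z * y * y from hf.plac₂ 1 2 rfl)]
  have r₄ (t : M) : z * (x * t) = x * (z * t) := by
    simp only [← mul_assoc, (show x * z = z * x from hf.comm 0 2 (by decide))]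
  have r₅ (t : M) : z * (y * (x * (y * t))) = y * (x * (z * (y * t))) := by
    simp only [← mul_assoc, (show y * x * z * y = z * y * x * y from hf.partic 0 1 2 rfl rfl)]
  have r₆ (t : M) : y * (z * (y * (x * t))) = y * (x * (z * (y * t))) := by
    rw [← r₃, r₁, r₅]
  -- Both words end in `z` and no left-hand side does, so every redex has a tail `t`.
  simp only [pow_succ, pow_zero, one_mul, mul_assoc, r₁, r₂, r₃, r₄, r₅, r₆]

end IsParticFamily

namespace ParticAlgebra

variable (K : Type*) [CommRing K] (N : ℕ)

noncomputable def ι (i : Fin (N - 1)) : ParticAlgebra K N :=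
  RingQuot.mkAlgHom K (ParticRel K N) (FreeAlgebra.ι K i)

theorem ppa_val_add_one (i : Fin (N - 1)) : ppa K N (i + 1) = ι K N i := by
  rw [ppa, dif_pos (by omega)]
  rfl

theorem isParticFamily_ι : IsParticFamily (ι K N) where
  plac₁ i j h := by
    simp only [ι, ← map_mul]; exact RingQuot.mkAlgHom_rel K (ParticRel.plac1 i j h)
  plac₂ i j h := by
    simp only [ι, ← map_mul]; exact RingQuot.mkAlgHom_rel K (ParticRel.plac2 i j h)
  comm i j h := by
    simp only [ι, ← map_mul]; exact RingQuot.mkAlgHom_rel K (ParticRel.comm i j h)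
  partic lo mid hi h₁ h₂ := by
    simp only [ι, ← map_mul]; exact RingQuot.mkAlgHom_rel K (ParticRel.partic lo mid hi h₁ h₂)

variable {K N} {A : Type*} [Semiring A] [Algebra K A]

noncomputable def lift (f : Fin (N - 1) → A) (hf : IsParticFamily f) :
    ParticAlgebra K N →ₐ[K] A :=
  RingQuot.liftAlgHom K ⟨FreeAlgebra.lift K f, hf.lift_eq_lift_of_particRel⟩

@[simp]
theorem lift_ι (f : Fin (N - 1) → A) (hf : IsParticFamily f) (i : Fin (N - 1)) :
    lift f hf (ι K N i) = f i := by
  rw [lift, ι, RingQuot.liftAlgHom_mkAlgHom_apply, FreeAlgebra.lift_ι_apply]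

end ParticAlgebra

open ParticAlgebra in
/-- The partic algebra on three generators `a_1, a_2, a_3` has zero divisors:
`a_3^5 a_2^8 a_1^8 a_2^3 a_3 − a_3^5 a_2^7 a_1^8 a_2^4 a_3` is nonzero but is annihilated by
left multiplication by `a_2`. -/
theorem stmt11 (K : Type*) [Field K] :
    (ppa K 4 3 ^ 5 * ppa K 4 2 ^ 8 * ppa K 4 1 ^ 8 * ppa K 4 2 ^ 3 * ppa K 4 3 -
        ppa K 4 3 ^ 5 * ppa K 4 2 ^ 7 * ppa K 4 1 ^ 8 * ppa K 4 2 ^ 4 * ppa K 4 3 ≠ 0) ∧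
      ppa K 4 2 *
        (ppa K 4 3 ^ 5 * ppa K 4 2 ^ 8 * ppa K 4 1 ^ 8 * ppa K 4 2 ^ 3 * ppa K 4 3 -
          ppa K 4 3 ^ 5 * ppa K 4 2 ^ 7 * ppa K 4 1 ^ 8 * ppa K 4 2 ^ 4 * ppa K 4 3) = 0 := by
  rw [show ppa K 4 1 = ι K 4 0 from ppa_val_add_one K 4 0,
    show ppa K 4 2 = ι K 4 1 from ppa_val_add_one K 4 1,
    show ppa K 4 3 = ι K 4 2 from ppa_val_add_one K 4 2]
  refine ⟨sub_ne_zero.mpr fun h => ?_,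
    (mul_sub _ _ _).trans (sub_eq_zero_of_eq (isParticFamily_ι K 4).fin_three_mul_eq_mul)⟩
  let shift : Fin 3 → Function.End ℕ := ![Nat.succ, Nat.pred, 1]
  have hshift : IsParticFamily shift := .of_mul_eq_one (funext Nat.pred_succ)
  have h_shift := congrArg (lift _ (hshift.map (MonoidAlgebra.of K _))) h
  simp only [map_mul, map_pow, lift_ι, Function.comp_apply] at h_shift
  simp only [← map_mul, ← map_pow] at h_shift
  exact absurd (congrArg (fun g : Function.End ℕ => g 0) (MonoidAlgebra.of_injective h_shift))
    (by decide)
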